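/- arXiv:math/0512097 — 2 statements merged into one kernel-verified Lean document; each statement's English description precedes it below -/
import Mathlib

section
/- Let C be a Serre subcategory of the category of Ψ-modules in a ringed topos (S, Ψ), and let ε: (T•, O•) → (S, Ψ) be a flat augmented simplicial (or strictly simplicial) ringed topos. Suppose ε^*: C → C• is an equivalence onto its essential image C• with quasi-inverse R⁰ε_*, and Rⁱε_* ε^* F = 0 for i > 0 and F ∈ C. Then C• is closed under extensions, kernels, and cokernels in Mod(O•). -/
/-!
For `F` in `C` the unit `F ⟶ ε_* ε^* F` is an isomorphism, so `ε^*` is full on `C`: a morphism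
`ε^* F₁ ⟶ ε^* F₂` is `ε^*` of its adjoint followed by the inverse unit. Exactness of `ε^*` then
identifies kernels and cokernels in `C•` with `ε^*` of kernels and cokernels in `C`. For an
extension `0 ⟶ X₁ ⟶ X₂ ⟶ X₃ ⟶ 0` with ends in `C•`, the vanishing of `R¹ε_*` on `X₁` keeps
`ε_*` of it exact. Its ends are isomorphic to objects of `C`, hence lie in `C` (a class closed
under extensions that contains a zero object is closed under isomorphisms), so `ε_* X₂` lies in
`C`, and the five lemma applied to the counit `ε^* ε_* ⟶ 𝟭` shows `ε^* ε_* X₂ ≅ X₂`.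
-/

open CategoryTheory Limits

namespace CategoryTheory

lemma ObjectProperty.isClosedUnderIsomorphisms_of_isClosedUnderExtensions {M : Type*}
    [Category M] [Abelian M] (P : ObjectProperty M) [P.IsClosedUnderExtensions]
    [P.ContainsZero] : P.IsClosedUnderIsomorphisms where
  of_iso {F G} e hF := by
    obtain ⟨Z, hZ, hPZ⟩ := P.exists_prop_of_containsZero
    let S : ShortComplex M := ShortComplex.mk e.hom (0 : G ⟶ Z) comp_zero
    have hS : S.ShortExact :=
      { exact := (S.exact_iff_epi rfl).2 inferInstance
        epi_g := hZ.epi _ }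
    exact P.prop_X₂_of_shortExact hS hF hPZ

namespace Adjunction

variable {M N : Type*} [Category M] [Category N] {L : M ⥤ N} {R : N ⥤ M} (adj : L ⊣ R)

lemma isIso_counit_app_of_iso_of_isIso_unit_app {F : M} {X : N} (e : L.obj F ≅ X)
    [IsIso (adj.unit.app F)] : IsIso (adj.counit.app X) := by
  have : IsIso (adj.counit.app (L.obj F)) :=
    IsIso.of_isIso_fac_left (adj.left_triangle_components F)
  exact (NatTrans.isIso_app_iff_of_iso adj.counit e).1 this

lemma exists_map_eq_of_isIso_unit_app {F₁ F₂ : M} [IsIso (adj.unit.app F₂)]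
    (f : L.obj F₁ ⟶ L.obj F₂) : ∃ g : F₁ ⟶ F₂, L.map g = f := by
  refine ⟨adj.homEquiv _ _ f ≫ inv (adj.unit.app F₂), ?_⟩
  have hinv : L.map (inv (adj.unit.app F₂)) = adj.counit.app (L.obj F₂) := by
    rw [Functor.map_inv]
    exact IsIso.inv_eq_of_hom_inv_id (adj.left_triangle_components F₂)
  simp [homEquiv_unit, hinv]

variable {C : ObjectProperty M}

lemma prop_obj_of_prop_map [C.IsClosedUnderIsomorphisms]
    (hunit : ∀ F, C F → IsIso (adj.unit.app F)) {X : N} (hX : C.map L X) : C (R.obj X) := by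
  obtain ⟨F, hF, ⟨e⟩⟩ := hX
  have := hunit F hF
  exact C.prop_of_iso (asIso (adj.unit.app F) ≪≫ R.mapIso e) hF

variable [Abelian M] [Abelian N]

lemma prop_map_kernel [PreservesFiniteLimits L] (hunit : ∀ F, C F → IsIso (adj.unit.app F))
    (hker : ∀ {F₁ F₂ : M} (g : F₁ ⟶ F₂), C F₁ → C F₂ → C (kernel g))
    {X Y : N} (f : X ⟶ Y) (hX : C.map L X) (hY : C.map L Y) : C.map L (kernel f) := by
  obtain ⟨F₁, hF₁, ⟨e₁⟩⟩ := hX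
  obtain ⟨F₂, hF₂, ⟨e₂⟩⟩ := hY
  have := hunit F₂ hF₂
  obtain ⟨g, hg⟩ := adj.exists_map_eq_of_isIso_unit_app (e₁.hom ≫ f ≫ e₂.inv)
  exact ⟨kernel g, hker g hF₁ hF₂,
    ⟨PreservesKernel.iso L g ≪≫ kernel.mapIso (L.map g) f e₁ e₂ (by simp [hg])⟩⟩

lemma prop_map_cokernel [PreservesFiniteColimits L] (hunit : ∀ F, C F → IsIso (adj.unit.app F))
    (hcoker : ∀ {F₁ F₂ : M} (g : F₁ ⟶ F₂), C F₁ → C F₂ → C (cokernel g))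
    {X Y : N} (f : X ⟶ Y) (hX : C.map L X) (hY : C.map L Y) : C.map L (cokernel f) := by
  obtain ⟨F₁, hF₁, ⟨e₁⟩⟩ := hX
  obtain ⟨F₂, hF₂, ⟨e₂⟩⟩ := hY
  have := hunit F₂ hF₂
  obtain ⟨g, hg⟩ := adj.exists_map_eq_of_isIso_unit_app (e₁.hom ≫ f ≫ e₂.inv)
  exact ⟨cokernel g, hcoker g hF₁ hF₂,
    ⟨PreservesCokernel.iso L g ≪≫ cokernel.mapIso (L.map g) f e₁ e₂ (by simp [hg])⟩⟩

lemma prop_map_X₂_of_shortExact [L.Additive] [R.Additive] [PreservesFiniteLimits L]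
    [PreservesFiniteColimits L] [C.IsClosedUnderExtensions] [C.IsClosedUnderIsomorphisms]
    (hunit : ∀ F, C F → IsIso (adj.unit.app F)) {S : ShortComplex N} (hS : S.ShortExact)
    (hRS : (S.map R).ShortExact) (h₁ : C.map L S.X₁) (h₃ : C.map L S.X₃) : C.map L S.X₂ := by
  have isIso_counit {X : N} (hX : C.map L X) : IsIso (adj.counit.app X) := by
    obtain ⟨F, hF, ⟨e⟩⟩ := hX
    have := hunit F hF
    exact adj.isIso_counit_app_of_iso_of_isIso_unit_app e
  have : IsIso (adj.counit.app S.X₂) :=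
    ShortComplex.isIso₂_of_shortExact_of_isIso₁₃' (S.mapNatTrans adj.counit)
      (hRS.map_of_exact L) hS (isIso_counit h₁) (isIso_counit h₃)
  refine ⟨R.obj S.X₂, ?_, ⟨asIso (adj.counit.app S.X₂)⟩⟩
  exact C.prop_X₂_of_shortExact hRS (adj.prop_obj_of_prop_map hunit h₁)
    (adj.prop_obj_of_prop_map hunit h₃)

end Adjunction

end CategoryTheory

theorem essential_image_closed_under_ker_coker_ext
    {M N : Type*} [Category M] [Category N] [Abelian M] [Abelian N]
    (epull : M ⥤ N)  -- ε^*
    (epush : N ⥤ M)  -- ε_*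
    [epull.Additive] [epush.Additive]
    (adj : epull ⊣ epush)
    -- ε^* is exact (ε is flat)
    [PreservesFiniteLimits epull] [PreservesFiniteColimits epull]
    (C : M → Prop)
    -- C is a Serre subcategory: closed under kernels, cokernels and extensions
    (hCker : ∀ {F₁ F₂ : M} (f : F₁ ⟶ F₂), C F₁ → C F₂ → C (kernel f) ∧ C (cokernel f))
    (hCext : ∀ S : ShortComplex M, S.ShortExact → C S.X₁ → C S.X₃ → C S.X₂)
    -- the unit F → ε_* ε^* F is an isomorphism for F ∈ C
    (hunit : ∀ F : M, C F → IsIso (adj.unit.app F))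
    -- R¹ε_* ε^* F = 0 for F ∈ C: ε_* preserves exactness of extensions of
    -- anything by an object of ε^*(C)
    (hR1 : ∀ S : ShortComplex N, S.ShortExact →
      (∃ F, C F ∧ Nonempty (epull.obj F ≅ S.X₁)) → (S.map epush).ShortExact) :
    -- C• := essential image of C under ε^* is closed under kernels, cokernels
    (∀ {X Y : N} (f : X ⟶ Y),
      (∃ F, C F ∧ Nonempty (epull.obj F ≅ X)) →
      (∃ F, C F ∧ Nonempty (epull.obj F ≅ Y)) →
      (∃ F, C F ∧ Nonempty (epull.obj F ≅ kernel f)) ∧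
      (∃ F, C F ∧ Nonempty (epull.obj F ≅ cokernel f))) ∧
    -- ... and extensions
    (∀ S : ShortComplex N, S.ShortExact →
      (∃ F, C F ∧ Nonempty (epull.obj F ≅ S.X₁)) →
      (∃ F, C F ∧ Nonempty (epull.obj F ≅ S.X₃)) →
      (∃ F, C F ∧ Nonempty (epull.obj F ≅ S.X₂))) := by
  have : ObjectProperty.IsClosedUnderExtensions C := ⟨fun hS h₁ h₃ => hCext _ hS h₁ h₃⟩
  refine ⟨fun f hX hY => ⟨?_, ?_⟩, fun S hS h₁ h₃ => ?_⟩
  · exact adj.prop_map_kernel hunit (fun g h₁ h₂ => (hCker g h₁ h₂).1) f hX hY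
  · exact adj.prop_map_cokernel hunit (fun g h₁ h₂ => (hCker g h₁ h₂).2) f hX hY
  · have ⟨F₁, hF₁, _⟩ := h₁
    have : ObjectProperty.ContainsZero C :=
      ⟨⟨cokernel (𝟙 F₁), isZero_cokernel_of_epi _, (hCker _ hF₁ hF₁).2⟩⟩
    have := ObjectProperty.isClosedUnderIsomorphisms_of_isClosedUnderExtensions C
    exact adj.prop_map_X₂_of_shortExact hunit hS (hR1 S hS h₁) h₁ h₃
end

section
/- In the formal setting of the previous statement (Rf_! := D_Y Rf_* D_X, f^! := D_X f^* D_Y with biduality and the standard adjunctions, plus the assumption that f^* is monoidal: f^*(A ⊗^L B) ≅ f^*A ⊗^L f^*B, and RHom(A,B) ≅ D(A ⊗^L D(B))), the projection formula holds: Rf_!(A ⊗^L f^* B) ≅ Rf_! A ⊗^L B for A ∈ D_c(X), B ∈ D_c(Y). -/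
/-!
Currying `[X ⊗ Y, Z] ≅ [Y, [X, Z]]` combined with the braiding gives `D(A ⊗ F) ≅ RHom(A, D F)`.
Taking `F = f^* B ≅ f^* D_Y D_Y B` identifies `D_X(A ⊗ f^* B)` with `RHom(A, f^! D_Y B)`; pushing
forward and applying the duality adjunction turns this into `RHom(Rf_! A, D_Y B) ≅ D_Y(Rf_! A ⊗ B)`,
and dualizing once more, biduality on `Y` gives `Rf_!(A ⊗ f^* B) ≅ Rf_! A ⊗ B`.
-/

open CategoryTheory MonoidalCategory MonoidalClosed

namespace CategoryTheory.MonoidalClosed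

variable {C : Type*} [Category C] [MonoidalCategory C] [MonoidalClosed C]

noncomputable def ihomMapIsoLeft {X Y : C} (e : X ≅ Y) (Z : C) :
    (ihom Y).obj Z ≅ (ihom X).obj Z :=
  (internalHom.mapIso e.op).app Z

noncomputable def ihomTensorIso [BraidedCategory C] (X Y Z : C) :
    (ihom (X ⊗ Y)).obj Z ≅ (ihom X).obj ((ihom Y).obj Z) :=
  ihomMapIsoLeft (β_ Y X) Z ≪≫ ihomCurryIso Y X Z

end CategoryTheory.MonoidalClosed

theorem projection_formula_general
    {DX DY : Type*} [Category DX] [Category DY]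
    [MonoidalCategory DX] [SymmetricCategory DX] [MonoidalClosed DX]
    [MonoidalCategory DY] [SymmetricCategory DY] [MonoidalClosed DY]
    (ΩX : DX) (ΩY : DY)
    (fpush : DX ⥤ DY)  -- Rf_*
    (fstar : DY ⥤ DX)  -- f^*
    -- biduality D ∘ D ≅ id on both sides
    (hbidY : ∀ A : DY, Nonempty (A ≅ (ihom ((ihom A).obj ΩY)).obj ΩY))
    -- the duality adjunction Rf_* RHom(A, f^! B) ≅ RHom(Rf_! A, B)
    (hdualadj : ∀ (A : DX) (B : DY),
      Nonempty (fpush.obj ((ihom A).obj ((ihom (fstar.obj ((ihom B).obj ΩY))).obj ΩX))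
        ≅ (ihom ((ihom (fpush.obj ((ihom A).obj ΩX))).obj ΩY)).obj B))
    (A : DX) (B : DY) :
    -- Rf_!(A ⊗^L f^* B) ≅ Rf_! A ⊗^L B, where Rf_! C = D_Y (Rf_* (D_X C))
    Nonempty ((ihom (fpush.obj ((ihom (A ⊗ fstar.obj B)).obj ΩX))).obj ΩY
      ≅ ((ihom (fpush.obj ((ihom A).obj ΩX))).obj ΩY) ⊗ B) := by
  set R := (ihom (fpush.obj ((ihom A).obj ΩX))).obj ΩY
  obtain ⟨bidB⟩ := hbidY B
  obtain ⟨bidRB⟩ := hbidY (R ⊗ B)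
  obtain ⟨adj⟩ := hdualadj A ((ihom B).obj ΩY)
  have pushed : fpush.obj ((ihom (A ⊗ fstar.obj B)).obj ΩX) ≅ (ihom (R ⊗ B)).obj ΩY :=
    fpush.mapIso (ihomTensorIso A _ ΩX ≪≫
        (ihom A).mapIso (ihomMapIsoLeft (fstar.mapIso bidB) ΩX).symm) ≪≫
      adj ≪≫ (ihomTensorIso R B ΩY).symm
  exact ⟨ihomMapIsoLeft pushed.symm ΩY ≪≫ bidRB.symm⟩

theorem projection_formula
    {DX DY : Type*} [Category DX] [Category DY]
    [MonoidalCategory DX] [SymmetricCategory DX] [MonoidalClosed DX]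
    [MonoidalCategory DY] [SymmetricCategory DY] [MonoidalClosed DY]
    (ΩX : DX) (ΩY : DY)
    (fpush : DX ⥤ DY)  -- Rf_*
    (fstar : DY ⥤ DX)  -- f^*
    -- biduality D ∘ D ≅ id on both sides
    (hbidX : ∀ A : DX, Nonempty (A ≅ (ihom ((ihom A).obj ΩX)).obj ΩX))
    (hbidY : ∀ A : DY, Nonempty (A ≅ (ihom ((ihom A).obj ΩY)).obj ΩY))
    -- RHom(A, B) ≅ D(A ⊗^L D(B)) on both sides
    (hrx : ∀ A B : DX, Nonempty ((ihom A).obj B ≅ (ihom (A ⊗ (ihom B).obj ΩX)).obj ΩX))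
    (hry : ∀ A B : DY, Nonempty ((ihom A).obj B ≅ (ihom (A ⊗ (ihom B).obj ΩY)).obj ΩY))
    -- f^* is monoidal
    (hmon : ∀ A B : DY, Nonempty (fstar.obj (A ⊗ B) ≅ fstar.obj A ⊗ fstar.obj B))
    -- the duality adjunction Rf_* RHom(A, f^! B) ≅ RHom(Rf_! A, B)
    (hdualadj : ∀ (A : DX) (B : DY),
      Nonempty (fpush.obj ((ihom A).obj ((ihom (fstar.obj ((ihom B).obj ΩY))).obj ΩX))
        ≅ (ihom ((ihom (fpush.obj ((ihom A).obj ΩX))).obj ΩY)).obj B))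
    (A : DX) (B : DY) :
    -- Rf_!(A ⊗^L f^* B) ≅ Rf_! A ⊗^L B, where Rf_! C = D_Y (Rf_* (D_X C))
    Nonempty ((ihom (fpush.obj ((ihom (A ⊗ fstar.obj B)).obj ΩX))).obj ΩY
      ≅ ((ihom (fpush.obj ((ihom A).obj ΩX))).obj ΩY) ⊗ B) :=
  projection_formula_general ΩX ΩY fpush fstar hbidY hdualadj A B
end
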